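/- Let w ∈ ℝ^K, θ = ∑_{k=1}^K w_k²(q^(k)−1)d^(k), and Q_{w²(q−2)} = ∑_{k=1}^K w_k²(q^(k)−2)(q^(k)−1)Q^(k). Then for every v ∈ ℝ^r, θ·⟨v,v⟩_π + ⟨v, Q_{w²(q−2)} v⟩_π ≥ (∑_{k=1}^K w_k² d^(k))·⟨v,v⟩_π. -/
import Mathlib


open Matrix Finset


lemma aux16 (r : ℕ) (π : Fin r → ℝ) (hπpos : ∀ i, 0 < π i)
    (n : ℕ) (hn : 2 ≤ n)
    (p : (Fin n → Fin r) → ℝ)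
    (hp_nonneg : ∀ g, 0 ≤ p g)
    (hp_symm : ∀ (g : Fin n → Fin r) (s : Equiv.Perm (Fin n)), p (g ∘ s) = p g)
    (d : ℝ)
    (hdeg : ∀ i : Fin r,
      (∑ g : Fin n → Fin r,
        if g ⟨0, by omega⟩ = i then
          p g * ∏ ℓ ∈ Finset.univ.erase (⟨0, by omega⟩ : Fin n), π (g ℓ)
        else 0) = d)
    (D : Matrix (Fin r) (Fin r) ℝ)
    (hD : ∀ i j, D i j =
      ∑ g : Fin n → Fin r,
        if g ⟨0, by omega⟩ = i ∧ g ⟨1, by omega⟩ = j then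
          p g *
            ∏ ℓ ∈ (Finset.univ.erase (⟨0, by omega⟩ : Fin n)).erase
                (⟨1, by omega⟩ : Fin n),
              π (g ℓ)
        else 0)
    (v : Fin r → ℝ) :
    0 ≤ d * (∑ a, π a * v a * v a) +
        ((n : ℝ) - 1) * (∑ a, π a * v a * ((D * Matrix.diagonal π).mulVec v) a) := by
  set z0 : Fin n := ⟨0, by omega⟩ with hz0
  set z1 : Fin n := ⟨1, by omega⟩ with hz1
  have hz01 : z0 ≠ z1 := by simp [hz0, hz1, Fin.ext_iff]
  set S : ℝ := ∑ a, π a * v a * v a with hS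
  set B : ℝ := ∑ a, π a * v a * ((D * Matrix.diagonal π).mulVec v) a with hB
  -- permutation invariance
  have hAperm : ∀ (s : Equiv.Perm (Fin n)) (ℓ m : Fin n),
      (∑ g : Fin n → Fin r, p g * (∏ j, π (g j)) * (v (g (s ℓ)) * v (g (s m))))
        = ∑ g : Fin n → Fin r, p g * (∏ j, π (g j)) * (v (g ℓ) * v (g m)) := by
    intro s ℓ m
    refine (Fintype.sum_equiv (Equiv.arrowCongr s (Equiv.refl (Fin r)))
      (fun g => p g * (∏ j, π (g j)) * (v (g ℓ) * v (g m)))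
      (fun g => p g * (∏ j, π (g j)) * (v (g (s ℓ)) * v (g (s m)))) ?_).symm
    intro g
    have h1 : (Equiv.arrowCongr s (Equiv.refl (Fin r))) g = g ∘ ⇑s.symm := by
      ext x; simp [Equiv.arrowCongr]
    have h3 : (∏ x, π (g (s.symm x))) = ∏ j, π (g j) :=
      Equiv.prod_comp s.symm (fun j => π (g j))
    rw [h1]
    simp only [Function.comp_apply, Equiv.symm_apply_apply]
    rw [hp_symm g s.symm, h3]
  -- value at (z0, z0)
  have hA00 : (∑ g : Fin n → Fin r, p g * (∏ j, π (g j)) * (v (g z0) * v (g z0)))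
      = d * S := by
    have step : (∑ g : Fin n → Fin r, p g * (∏ j, π (g j)) * (v (g z0) * v (g z0)))
        = ∑ i, (π i * v i * v i) *
          ∑ g : Fin n → Fin r,
            (if g z0 = i then p g * ∏ ℓ ∈ Finset.univ.erase z0, π (g ℓ) else 0) := by
      simp_rw [Finset.mul_sum, mul_ite, mul_zero]
      rw [Finset.sum_comm]
      refine Finset.sum_congr rfl fun g _ => ?_
      rw [Finset.sum_ite_eq]
      simp only [Finset.mem_univ, if_true]
      rw [← Finset.mul_prod_erase Finset.univ (fun j => π (g j)) (Finset.mem_univ z0)]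
      ring
    rw [step]
    simp_rw [hdeg]
    rw [hS, Finset.mul_sum]
    exact Finset.sum_congr rfl fun i _ => mul_comm _ _
  -- value at (z0, z1)
  have hA01 : (∑ g : Fin n → Fin r, p g * (∏ j, π (g j)) * (v (g z0) * v (g z1)))
      = B := by
    have hz1mem : z1 ∈ Finset.univ.erase z0 := by
      simp [Finset.mem_erase, Ne.symm hz01]
    have collapse : ∀ g : Fin n → Fin r,
        (∑ a, ∑ b, (π a * v a) * (π b * v b) *
          (if g z0 = a ∧ g z1 = b then
            p g * ∏ ℓ ∈ (Finset.univ.erase z0).erase z1, π (g ℓ) else 0))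
        = p g * (∏ j, π (g j)) * (v (g z0) * v (g z1)) := by
      intro g
      have hb : ∀ a, (∑ b, (π a * v a) * (π b * v b) *
          (if g z0 = a ∧ g z1 = b then
            p g * ∏ ℓ ∈ (Finset.univ.erase z0).erase z1, π (g ℓ) else 0))
          = (if g z0 = a then
              (π a * v a) * (π (g z1) * v (g z1)) *
                (p g * ∏ ℓ ∈ (Finset.univ.erase z0).erase z1, π (g ℓ)) else 0) := by
        intro a
        by_cases h : g z0 = a
        · simp only [h, true_and, mul_ite, mul_zero]
          rw [Finset.sum_ite_eq]
          simp
        · simp [h]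
      simp_rw [hb]
      rw [Finset.sum_ite_eq]
      simp only [Finset.mem_univ, if_true]
      rw [← Finset.mul_prod_erase Finset.univ (fun j => π (g j)) (Finset.mem_univ z0),
        ← Finset.mul_prod_erase (Finset.univ.erase z0) (fun j => π (g j)) hz1mem]
      ring
    have hmv : ∀ a, ((D * Matrix.diagonal π).mulVec v) a = ∑ b, D a b * (π b * v b) := by
      intro a
      simp only [Matrix.mulVec, dotProduct, Matrix.mul_apply]
      refine Finset.sum_congr rfl fun b _ => ?_
      rw [Finset.sum_eq_single b]
      · simp [Matrix.diagonal]; ring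
      · intro c _ hc; simp [Matrix.diagonal, hc]
      · simp
    have step : B = ∑ a, ∑ b, ∑ g : Fin n → Fin r, (π a * v a) * (π b * v b) *
        (if g z0 = a ∧ g z1 = b then
          p g * ∏ ℓ ∈ (Finset.univ.erase z0).erase z1, π (g ℓ) else 0) := by
      rw [hB]
      refine Finset.sum_congr rfl fun a _ => ?_
      rw [hmv, Finset.mul_sum]
      refine Finset.sum_congr rfl fun b _ => ?_
      rw [hD a b, Finset.sum_mul, Finset.mul_sum]
      refine Finset.sum_congr rfl fun g _ => ?_
      by_cases hgl : g z0 = a ∧ g z1 = b <;> simp [hgl] <;> ring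
    calc (∑ g : Fin n → Fin r, p g * (∏ j, π (g j)) * (v (g z0) * v (g z1)))
        = ∑ g : Fin n → Fin r, ∑ a, ∑ b, (π a * v a) * (π b * v b) *
            (if g z0 = a ∧ g z1 = b then
              p g * ∏ ℓ ∈ (Finset.univ.erase z0).erase z1, π (g ℓ) else 0) :=
          Finset.sum_congr rfl fun g _ => (collapse g).symm
      _ = ∑ a, ∑ g : Fin n → Fin r, ∑ b, (π a * v a) * (π b * v b) *
            (if g z0 = a ∧ g z1 = b then
              p g * ∏ ℓ ∈ (Finset.univ.erase z0).erase z1, π (g ℓ) else 0) :=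
          Finset.sum_comm
      _ = ∑ a, ∑ b, ∑ g : Fin n → Fin r, (π a * v a) * (π b * v b) *
            (if g z0 = a ∧ g z1 = b then
              p g * ∏ ℓ ∈ (Finset.univ.erase z0).erase z1, π (g ℓ) else 0) :=
          Finset.sum_congr rfl fun a _ => Finset.sum_comm
      _ = B := step.symm
  -- general value
  have hA : ∀ ℓ m : Fin n,
      (∑ g : Fin n → Fin r, p g * (∏ j, π (g j)) * (v (g ℓ) * v (g m)))
        = if ℓ = m then d * S else B := by
    intro ℓ m
    by_cases h : ℓ = m
    · subst h
      rw [if_pos rfl]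
      have hs := hAperm (Equiv.swap z0 ℓ) z0 z0
      rw [Equiv.swap_apply_left] at hs
      rw [← hs] at hA00
      exact hA00
    · rw [if_neg h]
      set s1 : Equiv.Perm (Fin n) := Equiv.swap z0 ℓ with hs1def
      have hs1 : s1 z0 = ℓ := Equiv.swap_apply_left _ _
      set t : Fin n := s1.symm m with ht
      have hts : s1 t = m := Equiv.apply_symm_apply _ _
      have htz0 : t ≠ z0 := by
        intro hc
        apply h
        rw [hc, hs1] at hts
        exact hts
      set s2 : Equiv.Perm (Fin n) := Equiv.swap z1 t with hs2def
      have hs2a : s2 z0 = z0 := Equiv.swap_apply_of_ne_of_ne hz01 (Ne.symm htz0)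
      have hs2b : s2 z1 = t := Equiv.swap_apply_left _ _
      set s : Equiv.Perm (Fin n) := s2.trans s1 with hsdef
      have hsa : s z0 = ℓ := by
        rw [hsdef]; simp only [Equiv.trans_apply, hs2a, hs1]
      have hsb : s z1 = m := by
        rw [hsdef]; simp only [Equiv.trans_apply, hs2b, hts]
      have hs := hAperm s z0 z1
      rw [hsa, hsb] at hs
      rw [← hs] at hA01
      exact hA01
  -- the nonnegative quantity T
  have hT : 0 ≤ ∑ g : Fin n → Fin r, p g * (∏ j, π (g j)) * (∑ ℓ, v (g ℓ)) ^ 2 := by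
    refine Finset.sum_nonneg fun g _ => ?_
    have h1 : (0:ℝ) ≤ ∏ j, π (g j) := Finset.prod_nonneg fun j _ => (hπpos _).le
    exact mul_nonneg (mul_nonneg (hp_nonneg g) h1) (sq_nonneg _)
  have hTeq : (∑ g : Fin n → Fin r, p g * (∏ j, π (g j)) * (∑ ℓ, v (g ℓ)) ^ 2)
      = ∑ ℓ : Fin n, ∑ m : Fin n, (if ℓ = m then d * S else B) := by
    have expand : ∀ g : Fin n → Fin r,
        p g * (∏ j, π (g j)) * (∑ ℓ, v (g ℓ)) ^ 2
          = ∑ ℓ : Fin n, ∑ m : Fin n, p g * (∏ j, π (g j)) * (v (g ℓ) * v (g m)) := by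
      intro g
      rw [sq, Finset.sum_mul_sum]
      rw [Finset.mul_sum]
      exact Finset.sum_congr rfl fun ℓ _ => by rw [Finset.mul_sum]
    simp_rw [expand]
    rw [Finset.sum_comm]
    refine Finset.sum_congr rfl fun ℓ _ => ?_
    rw [Finset.sum_comm]
    refine Finset.sum_congr rfl fun m _ => hA ℓ m
  have hsum : ∑ ℓ : Fin n, ∑ m : Fin n, (if ℓ = m then d * S else B)
      = (n : ℝ) * (d * S) + ((n : ℝ) * ((n : ℝ) - 1)) * B := by
    have inner : ∀ ℓ : Fin n, ∑ m : Fin n, (if ℓ = m then d * S else B)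
        = (d * S - B) + (n : ℝ) * B := by
      intro ℓ
      have : ∀ m : Fin n, (if ℓ = m then d * S else B)
          = (if ℓ = m then d * S - B else 0) + B := by
        intro m; by_cases h : ℓ = m <;> simp [h]
      simp_rw [this]
      rw [Finset.sum_add_distrib, Finset.sum_ite_eq]
      simp [Finset.card_univ, mul_comm]
    simp_rw [inner]
    simp [Finset.card_univ]
    ring
  have key : 0 ≤ (n : ℝ) * (d * S + ((n : ℝ) - 1) * B) := by
    have := hT
    rw [hTeq, hsum] at this
    nlinarith [this]
  have hnpos : (0:ℝ) < (n : ℝ) := by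
    have : 0 < n := by omega
    exact_mod_cast this
  nlinarith [key, hnpos]

/-- With `θ = ∑_k w_k²(q_k-1)d_k` and
`Q_{w²(q-2)} = ∑_k w_k²(q_k-2)(q_k-1)Q^(k)`, for every `v : ℝ^r`,
`θ ⟨v,v⟩_π + ⟨v, Q_{w²(q-2)} v⟩_π ≥ (∑_k w_k² d_k) ⟨v,v⟩_π`. -/
theorem statement16
    (r K : ℕ) (hr : 1 ≤ r) (hK : 1 ≤ K)
    (π : Fin r → ℝ) (hπpos : ∀ i, 0 < π i) (hπsum : ∑ i, π i = 1)
    (q : Fin K → ℕ) (hq : ∀ k, 2 ≤ q k)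
    (p : (k : Fin K) → (Fin (q k) → Fin r) → ℝ)
    (hp_nonneg : ∀ k g, 0 ≤ p k g)
    (hp_symm : ∀ k (g : Fin (q k) → Fin r) (s : Equiv.Perm (Fin (q k))), p k (g ∘ s) = p k g)
    (d : Fin K → ℝ)
    (hdeg : ∀ k, ∀ i : Fin r,
      (∑ g : Fin (q k) → Fin r,
        if g ⟨0, by have := hq k; omega⟩ = i then
          p k g * ∏ ℓ ∈ Finset.univ.erase (⟨0, by have := hq k; omega⟩ : Fin (q k)), π (g ℓ)
        else 0) = d k)
    (D : (k : Fin K) → Matrix (Fin r) (Fin r) ℝ)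
    (hD : ∀ k, ∀ i j, D k i j =
      ∑ g : Fin (q k) → Fin r,
        if g ⟨0, by have := hq k; omega⟩ = i ∧ g ⟨1, by have := hq k; omega⟩ = j then
          p k g *
            ∏ ℓ ∈ (Finset.univ.erase (⟨0, by have := hq k; omega⟩ : Fin (q k))).erase
                (⟨1, by have := hq k; omega⟩ : Fin (q k)),
              π (g ℓ)
        else 0)
    (Q : (k : Fin K) → Matrix (Fin r) (Fin r) ℝ)
    (hQ : ∀ k, Q k = D k * Matrix.diagonal π)
    (w : Fin K → ℝ) (v : Fin r → ℝ) :
    (∑ k, (w k) ^ 2 * ((q k : ℝ) - 1) * d k) * (∑ a, π a * v a * v a) +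
        (∑ a, π a * v a *
          ((∑ k, ((w k) ^ 2 * ((q k : ℝ) - 2) * ((q k : ℝ) - 1)) • Q k).mulVec v) a) ≥
      (∑ k, (w k) ^ 2 * d k) * (∑ a, π a * v a * v a) := by
  set S : ℝ := ∑ a, π a * v a * v a with hS
  have key : ∀ k, 0 ≤ d k * S +
      ((q k : ℝ) - 1) * (∑ a, π a * v a * ((Q k).mulVec v) a) := by
    intro k
    rw [hQ k]
    exact aux16 r π hπpos (q k) (hq k) (p k) (hp_nonneg k) (hp_symm k) (d k) (hdeg k)
      (D k) (hD k) v
  have hmv : ∀ a, ((∑ k, ((w k) ^ 2 * ((q k : ℝ) - 2) * ((q k : ℝ) - 1)) • Q k).mulVec v) a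
      = ∑ k, ((w k) ^ 2 * ((q k : ℝ) - 2) * ((q k : ℝ) - 1)) * ((Q k).mulVec v) a := by
    intro a
    simp only [Matrix.mulVec, dotProduct, Finset.sum_apply, Matrix.sum_apply,
      Matrix.smul_apply, smul_eq_mul, Finset.sum_mul]
    rw [Finset.sum_comm]
    refine Finset.sum_congr rfl fun k _ => ?_
    rw [Finset.mul_sum]
    exact Finset.sum_congr rfl fun b _ => by ring
  have hlin : (∑ a, π a * v a *
        ((∑ k, ((w k) ^ 2 * ((q k : ℝ) - 2) * ((q k : ℝ) - 1)) • Q k).mulVec v) a)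
      = ∑ k, ((w k) ^ 2 * ((q k : ℝ) - 2) * ((q k : ℝ) - 1)) *
          (∑ a, π a * v a * ((Q k).mulVec v) a) := by
    simp_rw [hmv, Finset.mul_sum]
    rw [Finset.sum_comm]
    refine Finset.sum_congr rfl fun k _ => ?_
    exact Finset.sum_congr rfl fun a _ => by ring
  rw [ge_iff_le, ← sub_nonneg, hlin]
  have hre : (∑ k, (w k) ^ 2 * ((q k : ℝ) - 1) * d k) * S +
        (∑ k, ((w k) ^ 2 * ((q k : ℝ) - 2) * ((q k : ℝ) - 1)) *
          (∑ a, π a * v a * ((Q k).mulVec v) a)) -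
        (∑ k, (w k) ^ 2 * d k) * S
      = ∑ k, ((w k) ^ 2 * ((q k : ℝ) - 2)) *
          (d k * S + ((q k : ℝ) - 1) * (∑ a, π a * v a * ((Q k).mulVec v) a)) := by
    rw [Finset.sum_mul, Finset.sum_mul, ← Finset.sum_add_distrib, ← Finset.sum_sub_distrib]
    exact Finset.sum_congr rfl fun k _ => by ring
  rw [hre]
  refine Finset.sum_nonneg fun k _ => ?_
  have hq2 : (0:ℝ) ≤ (q k : ℝ) - 2 := by
    have : (2:ℝ) ≤ (q k : ℝ) := by exact_mod_cast hq k
    linarith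
  exact mul_nonneg (mul_nonneg (sq_nonneg _) hq2) (key k)
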